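/- arXiv:1410.7757 — 2 statements merged into one kernel-verified Lean document; each statement's English description precedes it below -/
import Mathlib

section
/- The Coulomb kernel 1/|x-y| on ℝ³ is positive definite: for any real-valued Schwartz function f, ∫∫ f(x) f(y) / |x-y| dx dy ≥ 0. -/
/-!
Subordination to Gaussians: for `r > 0`, `r⁻¹ = π^(-1/2) ∫₀^∞ t^(-1/2) e^(-t r²) dt`, and in
dimension `d` each Gaussian kernel is a convolution square,
`e^(-t ‖x - y‖²) = (4t/π)^(d/2) ∫ e^(-2t ‖z - x‖²) e^(-2t ‖z - y‖²) dz`.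
So `‖x - y‖⁻¹ = ∫∫ w(t) e^(-2t ‖z - x‖²) e^(-2t ‖z - y‖²) dz dt` with `w ≥ 0`, and by Fubini
`∫∫ f(x) f(y) / ‖x - y‖ dx dy = ∫∫ w(t) (∫ f(x) e^(-2t ‖z - x‖²) dx)² dz dt ≥ 0`.
Fubini applies because `|f(x) f(y)| / ‖x - y‖` is integrable for bounded integrable `f` as soon
as `‖·‖⁻¹` is locally integrable, i.e. in dimension at least `2`.
-/

open MeasureTheory Real Set Module Metric

lemma ae_prod_fst_ne_snd {α : Type*} [MeasurableSpace α] [MeasurableEq α]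
    (μ ν : Measure α) [SFinite ν] [NullSingletonClass ν] : ∀ᵐ p ∂μ.prod ν, p.1 ≠ p.2 :=
  (Measure.ae_prod_mem_iff_ae_ae_mem measurableSet_diagonal.compl).2 <|
    ae_of_all _ fun x => (measure_eq_zero_iff_ae_notMem.1 (measure_singleton x)).mono
      fun _ hy hxy => hy hxy.symm

lemma integral_rpow_neg_half_mul_exp_neg_mul_sq {r : ℝ} (hr : 0 < r) :
    ∫ t in Ioi 0, t ^ (-(1 / 2) : ℝ) * exp (-t * r ^ 2) = √π / r := by
  have h := integral_rpow_mul_exp_neg_mul_Ioi (a := 1 / 2) one_half_pos (pow_pos hr 2)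
  rw [Gamma_one_half_eq, ← sqrt_eq_rpow, sqrt_div' _ (pow_nonneg hr.le 2), sqrt_one,
    sqrt_sq hr.le] at h
  convert h using 1
  · norm_num [mul_comm]
  · ring

noncomputable def coulombWeight (d : ℕ) (t : ℝ) : ℝ :=
  t ^ (-(1 / 2) : ℝ) / (√π * (π / (4 * t)) ^ (d / 2 : ℝ))

lemma coulombWeight_nonneg (d : ℕ) {t : ℝ} (ht : 0 < t) : 0 ≤ coulombWeight d t := by
  unfold coulombWeight
  positivity

section InnerProductSpace

variable {V : Type*} [NormedAddCommGroup V] [InnerProductSpace ℝ V]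

lemma exp_neg_mul_norm_sub_sq_mul_exp (t : ℝ) (x y z : V) :
    exp (-(2 * t) * ‖z - x‖ ^ 2) * exp (-(2 * t) * ‖z - y‖ ^ 2)
      = exp (-t * ‖x - y‖ ^ 2) * exp (-(4 * t) * ‖z - midpoint ℝ x y‖ ^ 2) := by
  have h :=
    EuclideanGeometry.dist_sq_add_dist_sq_eq_two_mul_dist_midpoint_sq_add_half_dist_sq z x y
  simp only [dist_eq_norm] at h
  rw [← exp_add, ← exp_add]
  congr 1
  linear_combination (-(2 * t)) * h

noncomputable def coulombDensity (x y : V) (q : ℝ × V) : ℝ :=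
  coulombWeight (finrank ℝ V) q.1 *
    (exp (-(2 * q.1) * ‖q.2 - x‖ ^ 2) * exp (-(2 * q.1) * ‖q.2 - y‖ ^ 2))

lemma coulombDensity_nonneg (x y : V) {q : ℝ × V} (hq : 0 < q.1) : 0 ≤ coulombDensity x y q :=
  mul_nonneg (coulombWeight_nonneg _ hq) (by positivity)

variable [FiniteDimensional ℝ V] [MeasurableSpace V] [BorelSpace V]

lemma integral_exp_neg_mul_norm_sub_sq_mul_exp {t : ℝ} (ht : 0 < t) (x y : V) :
    ∫ z, exp (-(2 * t) * ‖z - x‖ ^ 2) * exp (-(2 * t) * ‖z - y‖ ^ 2)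
      = (π / (4 * t)) ^ (finrank ℝ V / 2 : ℝ) * exp (-t * ‖x - y‖ ^ 2) := by
  simp_rw [exp_neg_mul_norm_sub_sq_mul_exp t x y]
  rw [integral_const_mul, integral_sub_right_eq_self (fun z => exp (-(4 * t) * ‖z‖ ^ 2)),
    GaussianFourier.integral_rexp_neg_mul_sq_norm (by positivity), mul_comm]

lemma measurable_coulombDensity :
    Measurable fun p : (V × V) × (ℝ × V) => coulombDensity p.1.1 p.1.2 p.2 := by
  unfold coulombDensity coulombWeight
  fun_prop

lemma integral_coulombDensity_slice {t : ℝ} (ht : 0 < t) (x y : V) :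
    ∫ z, coulombDensity x y (t, z) = (√π)⁻¹ * (t ^ (-(1 / 2) : ℝ) * exp (-t * ‖x - y‖ ^ 2)) := by
  have : (π / (4 * t)) ^ (finrank ℝ V / 2 : ℝ) ≠ 0 := by positivity
  simp only [coulombDensity, coulombWeight]
  rw [integral_const_mul, integral_exp_neg_mul_norm_sub_sq_mul_exp ht]
  field_simp

lemma integrable_coulombDensity {x y : V} (hxy : x ≠ y) :
    Integrable (coulombDensity x y) ((volume.restrict (Ioi 0)).prod volume) := by
  have hr : 0 < ‖x - y‖ := norm_pos_iff.2 (sub_ne_zero.2 hxy)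
  have hmeas : Measurable (coulombDensity x y) :=
    measurable_coulombDensity.comp (f := fun q : ℝ × V => ((x, y), q)) (by fun_prop)
  -- A nonzero Bochner integral forces integrability, so both conditions follow from the
  -- explicit integrals.
  refine (integrable_prod_iff hmeas.aestronglyMeasurable).2 ⟨?_, ?_⟩
  · filter_upwards [ae_restrict_mem measurableSet_Ioi] with t (ht : 0 < t)
    refine Integrable.of_integral_ne_zero ?_
    rw [integral_coulombDensity_slice ht]
    positivity
  · have hprofile :
        Integrable (fun t => (√π)⁻¹ * (t ^ (-(1 / 2) : ℝ) * exp (-t * ‖x - y‖ ^ 2)))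
          (volume.restrict (Ioi 0)) := by
      refine Integrable.of_integral_ne_zero ?_
      rw [integral_const_mul, integral_rpow_neg_half_mul_exp_neg_mul_sq hr]
      exact mul_ne_zero (by positivity) (div_pos (by positivity) hr).ne'
    refine hprofile.congr ?_
    filter_upwards [ae_restrict_mem measurableSet_Ioi] with t (ht : 0 < t)
    rw [← integral_coulombDensity_slice ht]
    exact integral_congr_ae
      (ae_of_all _ fun z => (norm_of_nonneg (coulombDensity_nonneg x y ht)).symm)

lemma integral_coulombDensity {x y : V} (hxy : x ≠ y) :
    ∫ q, coulombDensity x y q ∂(volume.restrict (Ioi 0)).prod volume = ‖x - y‖⁻¹ := by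
  have hr : 0 < ‖x - y‖ := norm_pos_iff.2 (sub_ne_zero.2 hxy)
  rw [integral_prod _ (integrable_coulombDensity hxy),
    setIntegral_congr_fun measurableSet_Ioi fun t ht => integral_coulombDensity_slice ht x y,
    integral_const_mul, integral_rpow_neg_half_mul_exp_neg_mul_sq hr]
  field_simp

lemma integral_mul_mul_coulombDensity_nonneg (f : V → ℝ) {q : ℝ × V} (hq : 0 < q.1) :
    0 ≤ ∫ p : V × V, f p.1 * f p.2 * coulombDensity p.1 p.2 q ∂volume.prod volume := by
  obtain ⟨t, z⟩ := q
  set g : V → ℝ := fun x => f x * exp (-(2 * t) * ‖z - x‖ ^ 2)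
  have hfactor : (fun p : V × V => f p.1 * f p.2 * coulombDensity p.1 p.2 (t, z))
      = fun p => coulombWeight (finrank ℝ V) t * (g p.1 * g p.2) := by
    ext p
    simp only [coulombDensity, g]
    ring
  rw [hfactor, integral_const_mul, integral_prod_mul]
  exact mul_nonneg (coulombWeight_nonneg _ hq) (mul_self_nonneg _)

lemma integrableOn_ball_inv_norm (hd : 2 ≤ finrank ℝ V) (r : ℝ) :
    IntegrableOn (fun x : V => ‖x‖⁻¹) (ball 0 r) := by
  have : Nontrivial V := Module.nontrivial_of_finrank_pos (R := ℝ) (by omega)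
  have hind : (ball (0 : V) r).indicator (fun x => ‖x‖⁻¹)
      = fun x => (Iio r).indicator (·⁻¹) ‖x‖ := by
    ext x
    simp [indicator]
  rw [← integrable_indicator_iff measurableSet_ball, hind, integrable_fun_norm_addHaar volume]
  have hpow : IntegrableOn (fun y : ℝ => y ^ (finrank ℝ V - 2)) (Ioo 0 r) :=
    (continuous_pow _).integrableOn_Icc.mono_set Ioo_subset_Icc_self
  refine (hpow.congr_fun (fun y hy => ?_) measurableSet_Ioo).of_forall_sdiff_eq_zero
    measurableSet_Ioi fun y hy => ?_
  · rw [smul_eq_mul, indicator_of_mem (show y ∈ Iio r from hy.2),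
      show finrank ℝ V - 1 = finrank ℝ V - 2 + 1 by omega, pow_succ,
      mul_inv_cancel_right₀ hy.1.ne']
  · have : y ∉ Iio r := fun h => hy.2 ⟨hy.1, h⟩
    rw [indicator_of_notMem this, smul_zero]

lemma integrable_mul_div_norm_sub (hd : 2 ≤ finrank ℝ V) {f g : V → ℝ} (hf : Integrable f)
    (hg : Integrable g) {M : ℝ} (hgM : ∀ y, |g y| ≤ M) :
    Integrable (fun p : V × V => f p.1 * g p.2 / ‖p.1 - p.2‖) (volume.prod volume) := by
  set K : V → ℝ := (ball 0 1).indicator fun u => ‖u‖⁻¹ with hK_def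
  have hK : Integrable K :=
    (integrable_indicator_iff measurableSet_ball).2 (integrableOn_ball_inv_norm hd 1)
  have hnear : Integrable (fun p : V × V => |f p.1| * K (p.2 - p.1)) (volume.prod volume) :=
    ((measurePreserving_prod_sub volume volume).integrable_comp
      (hf.abs.mul_prod hK).aestronglyMeasurable).2 (hf.abs.mul_prod hK)
  refine ((hnear.const_mul M).add (hf.abs.mul_prod hg.abs)).mono' ?_ (ae_of_all _ fun p => ?_)
  · simp_rw [div_eq_mul_inv]
    exact (hf.aestronglyMeasurable.comp_fst.mul hg.aestronglyMeasurable.comp_snd).mul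
      (measurable_fst.sub measurable_snd).norm.inv.aestronglyMeasurable
  obtain ⟨x, y⟩ := p
  simp only [norm_div, norm_mul, Real.norm_eq_abs, abs_norm, Pi.add_apply]
  rcases lt_or_ge ‖x - y‖ 1 with hclose | hfar
  · have hKxy : K (y - x) = ‖x - y‖⁻¹ := by
      rw [hK_def, indicator_of_mem (by rwa [mem_ball_zero_iff, norm_sub_rev]), norm_sub_rev]
    have : |f x| * |g y| * ‖x - y‖⁻¹ ≤ M * (|f x| * ‖x - y‖⁻¹) := by
      rw [mul_right_comm, mul_comm M]
      exact mul_le_mul_of_nonneg_left (hgM y) (by positivity)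
    rw [hKxy, div_eq_mul_inv]
    linarith [mul_nonneg (abs_nonneg (f x)) (abs_nonneg (g y))]
  · have hKxy : K (y - x) = 0 := indicator_of_notMem (by simpa [norm_sub_rev] using hfar) _
    rw [hKxy, mul_zero, mul_zero, zero_add]
    exact div_le_self (by positivity) hfar

lemma integrable_mul_mul_coulombDensity (hd : 2 ≤ finrank ℝ V) {f : V → ℝ} (hf : Integrable f)
    {M : ℝ} (hfM : ∀ x, |f x| ≤ M) :
    Integrable
      (fun pq : (V × V) × (ℝ × V) => f pq.1.1 * f pq.1.2 * coulombDensity pq.1.1 pq.1.2 pq.2)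
      ((volume.prod volume).prod ((volume.restrict (Ioi 0)).prod volume)) := by
  have : Nontrivial V := Module.nontrivial_of_finrank_pos (R := ℝ) (by omega)
  have hpos : ∀ᵐ q ∂(volume.restrict (Ioi (0 : ℝ))).prod (volume : Measure V), 0 < q.1 :=
    Measure.quasiMeasurePreserving_fst.ae (ae_restrict_mem measurableSet_Ioi)
  have hoff := ae_prod_fst_ne_snd (volume : Measure V) volume
  refine (integrable_prod_iff ?_).2 ⟨?_, ?_⟩
  · exact (hf.aestronglyMeasurable.comp_fst.mul hf.aestronglyMeasurable.comp_snd).comp_fst.mul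
      measurable_coulombDensity.aestronglyMeasurable
  · filter_upwards [hoff] with p hp
    exact (integrable_coulombDensity hp).const_mul (f p.1 * f p.2)
  · refine (integrable_mul_div_norm_sub hd hf hf hfM).norm.congr ?_
    filter_upwards [hoff] with p hp
    have hnorm : ∀ᵐ q ∂(volume.restrict (Ioi 0)).prod volume,
        ‖f p.1 * f p.2 * coulombDensity p.1 p.2 q‖
          = |f p.1 * f p.2| * coulombDensity p.1 p.2 q :=
      hpos.mono fun q hq => by
        rw [norm_mul, Real.norm_eq_abs, norm_of_nonneg (coulombDensity_nonneg _ _ hq)]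
    rw [integral_congr_ae hnorm, integral_const_mul, integral_coulombDensity hp, norm_div,
      norm_norm, Real.norm_eq_abs, div_eq_mul_inv]

theorem integral_integral_mul_div_norm_sub_nonneg (hd : 2 ≤ finrank ℝ V) {f : V → ℝ}
    (hf : Integrable f) {M : ℝ} (hfM : ∀ x, |f x| ≤ M) :
    0 ≤ ∫ x, ∫ y, f x * f y / ‖x - y‖ := by
  have : Nontrivial V := Module.nontrivial_of_finrank_pos (R := ℝ) (by omega)
  set μ : Measure (ℝ × V) := (volume.restrict (Ioi 0)).prod volume
  set F : V × V → ℝ × V → ℝ := fun p q => f p.1 * f p.2 * coulombDensity p.1 p.2 q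
  have hpos : ∀ᵐ q ∂μ, 0 < q.1 :=
    Measure.quasiMeasurePreserving_fst.ae (ae_restrict_mem measurableSet_Ioi)
  have hslice : ∀ p : V × V, p.1 ≠ p.2 → ∫ q, F p q ∂μ = f p.1 * f p.2 / ‖p.1 - p.2‖ :=
    fun p hp => by rw [integral_const_mul, integral_coulombDensity hp, div_eq_mul_inv]
  calc 0 ≤ ∫ q, ∫ p, F p q ∂volume.prod volume ∂μ :=
        integral_nonneg_of_ae (hpos.mono fun q hq => integral_mul_mul_coulombDensity_nonneg f hq)
    _ = ∫ p, ∫ q, F p q ∂μ ∂volume.prod volume :=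
        (integral_integral_swap (integrable_mul_mul_coulombDensity hd hf hfM)).symm
    _ = ∫ p : V × V, f p.1 * f p.2 / ‖p.1 - p.2‖ ∂volume.prod volume :=
        integral_congr_ae ((ae_prod_fst_ne_snd volume volume).mono hslice)
    _ = ∫ x, ∫ y, f x * f y / ‖x - y‖ := integral_prod _ (integrable_mul_div_norm_sub hd hf hf hfM)

end InnerProductSpace

/-- The Coulomb kernel on ℝ³ is positive definite: for a real Schwartz function `f`,
`∫∫ f(x) f(y) / |x-y| dx dy ≥ 0`. -/
theorem coulomb_kernel_posdef
    (f : SchwartzMap (EuclideanSpace ℝ (Fin 3)) ℝ) :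
    0 ≤ ∫ x, ∫ y, f x * f y / ‖x - y‖ :=
  integral_integral_mul_div_norm_sub_nonneg (by simp) f.integrable (f.norm_le_seminorm ℝ)
end

section
/- In a pivoted QR decomposition M E = Q R with R upper triangular with nonincreasing absolute values of diagonal entries, for any k the (k+1)-th largest singular value of M is bounded: σ_{k+1}(M) ≤ ‖R_{k+1:, k+1:}‖₂ where R_{k+1:, k+1:} is the trailing submatrix of R. -/
open Matrix

/-- Spectral (operator ℓ²→ℓ²) norm of a real matrix. -/
noncomputable def specNorm {a b : ℕ} (A : Matrix (Fin a) (Fin b) ℝ) : ℝ :=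
  ‖LinearMap.toContinuousLinearMap (Matrix.toEuclideanLin A)‖

/-- The `(k+1)`-th singular value of `M`, characterized (Eckart–Young) as the distance
in spectral norm from `M` to the set of matrices of rank at most `k`. -/
noncomputable def singularValueSucc {a b : ℕ} (M : Matrix (Fin a) (Fin b) ℝ) (k : ℕ) : ℝ :=
  sInf {r : ℝ | ∃ A : Matrix (Fin a) (Fin b) ℝ, A.rank ≤ k ∧ r = specNorm (M - A)}

/-!
Let `P` be the diagonal projection onto the coordinates `k, k+1, …` and `S` the matrix selecting
them, so that `S Sᵀ = 1` and `Sᵀ S = P`. The matrix `A = Q ((1 - P) R) Eᵀ` has rank at most `k`,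
and `M - A = Q (P R) Eᵀ`. Since `R` is upper triangular, the rows of `R` of index `≥ k` vanish
in the leading columns, so `P R = P R P = Sᵀ R₂₂ S`, where `R₂₂ = S R Sᵀ` is the trailing block.
All of `Q`, `Eᵀ`, `Sᵀ`, `S` have operator norm at most `1`, hence
`σ_{k+1}(M) ≤ ‖M - A‖ ≤ ‖R₂₂‖`.
-/

open scoped Matrix.Norms.L2Operator

namespace Matrix

section Selection

variable {l m n o α : Type*} [DecidableEq m] [NonAssocSemiring α]

theorem submatrix_eq_one_submatrix_mul_mul_transpose [Fintype m] [DecidableEq n] [Fintype n]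
    (A : Matrix m n α) (e₁ : l → m) (e₂ : o → n) :
    A.submatrix e₁ e₂ =
      (1 : Matrix m m α).submatrix e₁ id * A * ((1 : Matrix n n α).submatrix e₂ id)ᵀ := by
  have h₁ := one_submatrix_mul e₁ (Equiv.refl m) A
  have h₂ := mul_submatrix_one (Equiv.refl n) e₂ (A.submatrix e₁ id)
  simp only [Equiv.coe_refl, Equiv.refl_symm, Function.id_comp] at h₁ h₂
  rw [transpose_submatrix, transpose_one, h₁, h₂, submatrix_submatrix]
  rfl

theorem one_submatrix_mul_transpose_self [Fintype m] [DecidableEq l] {e : l → m}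
    (he : Function.Injective e) :
    (1 : Matrix m m α).submatrix e id * ((1 : Matrix m m α).submatrix e id)ᵀ = 1 := by
  have h := one_submatrix_mul e (Equiv.refl m) ((1 : Matrix m m α).submatrix id e)
  simp only [Equiv.coe_refl, Equiv.refl_symm, Function.id_comp, submatrix_submatrix,
    Function.comp_id] at h
  rw [transpose_submatrix, transpose_one, h]
  exact submatrix_one e he

theorem transpose_one_submatrix_mul_self [Fintype l] {e : l → m} (he : Function.Injective e) :
    ((1 : Matrix m m α).submatrix e id)ᵀ * (1 : Matrix m m α).submatrix e id =
      diagonal ((Set.range e).indicator 1) := by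
  classical
  ext i j
  simp only [mul_apply, transpose_apply, submatrix_apply, id_eq, one_apply, diagonal_apply]
  by_cases hi : i ∈ Set.range e
  · obtain ⟨l₀, rfl⟩ := hi
    rw [Fintype.sum_eq_single l₀ fun x hx => by simp [he.ne hx]]
    by_cases h : e l₀ = j
    · subst h; simp
    · simp [h]
  · have hne : ∀ x, e x ≠ i := fun x hx => hi ⟨x, hx⟩
    simp [hne, hi]

end Selection

theorem rank_one_sub_diagonal_indicator_range {l m K : Type*} [Field K] [Fintype l] [Fintype m]
    [DecidableEq m] {e : l → m} (he : Function.Injective e) :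
    (1 - diagonal ((Set.range e).indicator 1) : Matrix m m K).rank =
      Fintype.card m - Fintype.card l := by
  classical
  have hsupp : ∀ i, (1 - (Set.range e).indicator 1 i : K) ≠ 0 ↔ i ∉ Set.range e := by
    intro i
    by_cases hi : i ∈ Set.range e <;> simp [hi]
  rw [← diagonal_one, diagonal_sub, rank_diagonal,
    Fintype.card_congr (Equiv.subtypeEquivRight hsupp), Fintype.card_subtype_compl,
    Set.card_range_of_injective he]

section L2

variable {m n o p 𝕜 : Type*} [RCLike 𝕜] [Fintype m] [Fintype n] [Fintype o] [Fintype p]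

theorem l2_opNorm_le_one_of_conjTranspose_mul_self_eq_one [DecidableEq n] {A : Matrix m n 𝕜}
    (h : Aᴴ * A = 1) : ‖A‖ ≤ 1 := by
  have hone : ‖(1 : Matrix n n 𝕜)‖ ≤ 1 := by
    rw [← diagonal_one, l2_opNorm_diagonal]
    exact (pi_norm_le_iff_of_nonneg zero_le_one).2 fun _ => by simp
  rw [← h, l2_opNorm_conjTranspose_mul_self] at hone
  nlinarith [norm_nonneg A]

theorem l2_opNorm_le_one_of_mul_conjTranspose_self_eq_one [DecidableEq m] [DecidableEq n]
    {A : Matrix m n 𝕜} (h : A * Aᴴ = 1) : ‖A‖ ≤ 1 := by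
  rw [← l2_opNorm_conjTranspose]
  exact l2_opNorm_le_one_of_conjTranspose_mul_self_eq_one (by rwa [conjTranspose_conjTranspose])

theorem l2_opNorm_mul_mul_le_of_le_one [DecidableEq n] [DecidableEq o] [DecidableEq p]
    {A : Matrix m n 𝕜} {C : Matrix o p 𝕜} (hA : ‖A‖ ≤ 1) (hC : ‖C‖ ≤ 1) (B : Matrix n o 𝕜) :
    ‖A * B * C‖ ≤ ‖B‖ :=
  calc ‖A * B * C‖ ≤ ‖A‖ * ‖B‖ * ‖C‖ :=
        (l2_opNorm_mul _ _).trans (by gcongr; exact l2_opNorm_mul _ _)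
    _ ≤ 1 * ‖B‖ * 1 := by gcongr
    _ = ‖B‖ := by ring

end L2

end Matrix

theorem specNorm_eq_l2_opNorm {a b : ℕ} (A : Matrix (Fin a) (Fin b) ℝ) : specNorm A = ‖A‖ := rfl

theorem singularValueSucc_le_specNorm_sub {a b : ℕ} (M A : Matrix (Fin a) (Fin b) ℝ) {k : ℕ}
    (hA : A.rank ≤ k) : singularValueSucc M k ≤ specNorm (M - A) :=
  csInf_le ⟨0, by rintro r ⟨B, -, rfl⟩; exact norm_nonneg _⟩ ⟨A, hA, rfl⟩

def tailEmb (a k : ℕ) (i : Fin (a - k)) : Fin a := ⟨k + i, by omega⟩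

theorem tailEmb_injective (a k : ℕ) : Function.Injective (tailEmb a k) :=
  fun i j h => Fin.ext (by simpa [tailEmb] using h)

theorem range_tailEmb (a k : ℕ) : Set.range (tailEmb a k) = {i : Fin a | k ≤ (i : ℕ)} := by
  ext i
  refine ⟨?_, fun (hi : k ≤ (i : ℕ)) => ⟨⟨i - k, by omega⟩, Fin.ext (by simp [tailEmb]; omega)⟩⟩
  rintro ⟨j, rfl⟩
  simp [tailEmb]

abbrev tailSelect (α : Type*) [Zero α] [One α] (a k : ℕ) : Matrix (Fin (a - k)) (Fin a) α :=
  (1 : Matrix (Fin a) (Fin a) α).submatrix (tailEmb a k) id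

theorem transpose_tailSelect_mul_submatrix_mul_tailSelect {α : Type*} [Semiring α] {m n : ℕ}
    {R : Matrix (Fin m) (Fin n) α} (htri : ∀ (i : Fin m) (j : Fin n), (j : ℕ) < i → R i j = 0)
    (k : ℕ) :
    (tailSelect α m k)ᵀ * R.submatrix (tailEmb m k) (tailEmb n k) * tailSelect α n k =
      (diagonal ((Set.range (tailEmb m k)).indicator 1) : Matrix (Fin m) (Fin m) α) * R := by
  rw [submatrix_eq_one_submatrix_mul_mul_transpose R]
  simp only [← Matrix.mul_assoc]
  rw [transpose_one_submatrix_mul_self (tailEmb_injective m k),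
    Matrix.mul_assoc _ _ (tailSelect _ _ _),
    transpose_one_submatrix_mul_self (tailEmb_injective n k)]
  ext i j
  simp only [mul_diagonal, diagonal_mul, range_tailEmb, Set.indicator_apply, Set.mem_ofPred_eq,
    Pi.one_apply]
  by_cases hi : k ≤ (i : ℕ)
  · by_cases hj : k ≤ (j : ℕ)
    · simp [hi, hj]
    · simp [hi, hj, htri i j (by omega)]
  · simp [hi]

theorem l2_opNorm_transpose_tailSelect_mul_mul_tailSelect_le {m n : ℕ} (k : ℕ)
    (T : Matrix (Fin (m - k)) (Fin (n - k)) ℝ) :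
    ‖(tailSelect ℝ m k)ᵀ * T * tailSelect ℝ n k‖ ≤ ‖T‖ := by
  have hS (a : ℕ) : tailSelect ℝ a k * (tailSelect ℝ a k)ᵀ = 1 :=
    one_submatrix_mul_transpose_self (tailEmb_injective a k)
  refine l2_opNorm_mul_mul_le_of_le_one ?_ ?_ T
  · exact l2_opNorm_le_one_of_conjTranspose_mul_self_eq_one
      (by rw [conjTranspose_eq_transpose_of_trivial, transpose_transpose]; exact hS m)
  · exact l2_opNorm_le_one_of_mul_conjTranspose_self_eq_one
      (by rw [conjTranspose_eq_transpose_of_trivial]; exact hS n)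

/-- In a pivoted QR decomposition `M E = Q R` with `R` upper triangular with
nonincreasing absolute values of its diagonal entries, for any `k` the `(k+1)`-th
singular value of `M` is bounded by the spectral norm of the trailing submatrix
`R_{k+1:, k+1:}`. -/
theorem pivoted_qr_singular_value_bound
    {m n : ℕ} (M : Matrix (Fin m) (Fin n) ℝ)
    (E : Matrix (Fin n) (Fin n) ℝ) (σ : Equiv.Perm (Fin n)) (hE : E = σ.permMatrix ℝ)
    (Q : Matrix (Fin m) (Fin m) ℝ) (hQ : Qᵀ * Q = 1)
    (R : Matrix (Fin m) (Fin n) ℝ)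
    (hQR : M * E = Q * R)
    (htri : ∀ (i : Fin m) (j : Fin n), (j : ℕ) < (i : ℕ) → R i j = 0)
    (k : ℕ) :
    singularValueSucc M k ≤
      specNorm (R.submatrix
        (fun i : Fin (m - k) => (⟨k + i.1, by have := i.2; omega⟩ : Fin m))
        (fun j : Fin (n - k) => (⟨k + j.1, by have := j.2; omega⟩ : Fin n))) := by
  set P : Matrix (Fin m) (Fin m) ℝ := diagonal ((Set.range (tailEmb m k)).indicator 1)
  have hM : M = Q * R * Eᵀ := by
    rw [← hQR, Matrix.mul_assoc, hE, transpose_permMatrix, ← permMatrix_mul, inv_mul_cancel,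
      permMatrix_one, Matrix.mul_one]
  refine (singularValueSucc_le_specNorm_sub M (Q * ((1 - P) * R) * Eᵀ) ?rank).trans ?norm
  case rank =>
    calc _ ≤ ((1 - P) * R).rank := (rank_mul_le_left _ _).trans (rank_mul_le_right _ _)
      _ ≤ (1 - P).rank := rank_mul_le_left _ _
      _ = m - (m - k) := by
        simpa using rank_one_sub_diagonal_indicator_range (K := ℝ) (tailEmb_injective m k)
      _ ≤ k := by omega
  case norm =>
    rw [hM, ← Matrix.sub_mul, ← Matrix.mul_sub, Matrix.sub_mul, Matrix.one_mul, sub_sub_cancel,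
      ← transpose_tailSelect_mul_submatrix_mul_tailSelect htri k, specNorm_eq_l2_opNorm,
      specNorm_eq_l2_opNorm]
    have hQ₁ : ‖Q‖ ≤ 1 := l2_opNorm_le_one_of_conjTranspose_mul_self_eq_one
      (by rw [conjTranspose_eq_transpose_of_trivial]; exact hQ)
    have hE₁ : ‖Eᵀ‖ ≤ 1 := by
      rw [hE, transpose_permMatrix]
      exact permMatrix_l2_opNorm_le _
    exact (l2_opNorm_mul_mul_le_of_le_one hQ₁ hE₁ _).trans
      (l2_opNorm_transpose_tailSelect_mul_mul_tailSelect_le k _)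
end
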